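/- There is a bijection between directed o–d paths in the transfer-expanded graph and directed o–d paths in the original graph (of the form: a shuttle arc from o to a hub, a sequence of at most K-2 hub arcs, and a shuttle arc from a hub to d, or the direct arc o→d) that use at most K arcs in total. The bijection preserves the multiset of underlying original arcs and hence preserves path cost. -/

import Mathlib

/-- Vertices of the transfer-expanded graph: `none` is the origin `o`,
`some none` is the destination `d`, `some (some (i,k))` is hub `i` in layer `k`. -/
abbrev TEV (H : Type*) := Option (Option (H × ℕ))

/-- Vertices of the original graph: `none` is `o`, `some none` is `d`,
`some (some i)` is hub `i`. -/
abbrev OV (H : Type*) := Option (Option H)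

/-- Arcs of the transfer-expanded graph. -/
def TEArc {H : Type*} (K : ℕ) (hubArc : H → H → Prop) : TEV H → TEV H → Prop :=
  fun u v =>
    (u = none ∧ v = some none) ∨
    (∃ i : H, u = none ∧ v = some (some (i, 1))) ∨
    (∃ (i : H) (k : ℕ), 1 ≤ k ∧ k ≤ K - 1 ∧
      u = some (some (i, k)) ∧ v = some none) ∨
    (∃ (i j : H) (k : ℕ), hubArc i j ∧ 1 ≤ k ∧ k ≤ K - 2 ∧
      u = some (some (i, k)) ∧ v = some (some (j, k + 1)))

/-- Arcs of the original graph: the direct arc `(o,d)`, shuttle arcs `(o,i)`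
and `(i,d)` for every hub `i`, and hub arcs `(i,j)` for `hubArc i j`. -/
def OArc {H : Type*} (hubArc : H → H → Prop) : OV H → OV H → Prop :=
  fun u v =>
    (u = none ∧ v = some none) ∨
    (∃ i : H, u = none ∧ v = some (some i)) ∨
    (∃ i : H, u = some (some i) ∧ v = some none) ∨
    (∃ i j : H, hubArc i j ∧ u = some (some i) ∧ v = some (some j))

/-- Projection forgetting the layer of a transfer-expanded vertex. -/
def teProj {H : Type*} : TEV H → OV H
  | none => none
  | some none => some none
  | some (some (i, _)) => some (some i)

/-- The cost of a path (a list of vertices) under arc costs `γ`. -/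
def pathCost {V : Type*} (γ : V → V → ℝ) (p : List V) : ℝ :=
  ((p.zip p.tail).map fun q => γ q.1 q.2).sum

/-!
Forgetting layers sends arcs of the expanded graph to arcs of the original graph, so it maps
`o`–`d` paths to `o`–`d` paths and preserves the cost of every arc. Along an expanded path
starting at `o` the hub copy at position `n` lies in layer `n`, so the path is recovered from its
projection by lifting the vertex at position `n` to layer `n`. Conversely this lift of an original
path is an expanded path exactly when the layer bounds hold: the arc into `d` leaves from a layer
`≤ K - 1` and every hub arc from a layer `≤ K - 2`, i.e. the path has at most `K` arcs.
-/

lemma List.exists_eq_cons_cons {α : Type*} {l : List α} {a b : α} (ha : l.head? = some a)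
    (hb : l.getLast? = some b) (hab : a ≠ b) : ∃ c t, l = a :: c :: t := by
  rcases l with _ | ⟨x, _ | ⟨c, t⟩⟩
  · simp at ha
  · simp_all
  · simp only [List.head?_cons, Option.some.injEq] at ha
    exact ⟨c, t, ha ▸ rfl⟩

lemma pathCost_map {V W : Type*} (γ : W → W → ℝ) (f : V → W) (p : List V) :
    pathCost γ (p.map f) = pathCost (fun u v => γ (f u) (f v)) p := by
  rw [pathCost, pathCost, ← List.map_tail, List.zip_map, List.map_map]
  rfl

namespace TransferExpanded

variable {H : Type*} {K : ℕ} {hubArc : H → H → Prop}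

def layerVertex : ℕ → OV H → TEV H
  | _, none => none
  | _, some none => some none
  | k, some (some i) => some (some (i, k))

def liftPath : ℕ → List (OV H) → List (TEV H)
  | _, [] => []
  | n, v :: t => layerVertex n v :: liftPath (n + 1) t

/-- `AtLayer n v`: `v` may stand at position `n` of a path from `o` in the expanded graph. -/
def AtLayer (n : ℕ) : TEV H → Prop
  | none => n = 0
  | some none => True
  | some (some (_, k)) => k = n

@[simp]
lemma teProj_layerVertex (n : ℕ) (v : OV H) : teProj (layerVertex n v) = v := by
  rcases v with _ | _ | i <;> rfl

lemma map_teProj_liftPath (n : ℕ) (q : List (OV H)) : (liftPath n q).map teProj = q := by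
  induction q generalizing n with
  | nil => rfl
  | cons v t ih => simp [liftPath, ih]

lemma eq_dest_of_teProj_eq_dest {v : TEV H} (h : teProj v = some none) : v = some none := by
  rcases v with _ | _ | ⟨i, k⟩ <;> simp_all [teProj]

lemma layerVertex_teProj {n : ℕ} {v : TEV H} (h : AtLayer n v) :
    layerVertex n (teProj v) = v := by
  rcases v with _ | _ | ⟨i, k⟩ <;> simp_all [AtLayer, layerVertex, teProj]

lemma oArc_teProj {u v : TEV H} (h : TEArc K hubArc u v) :
    OArc hubArc (teProj u) (teProj v) := by
  rcases h with ⟨rfl, rfl⟩ | ⟨i, rfl, rfl⟩ | ⟨i, k, -, -, rfl, rfl⟩ |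
    ⟨i, j, k, hij, -, -, rfl, rfl⟩
  · exact Or.inl ⟨rfl, rfl⟩
  · exact Or.inr <| Or.inl ⟨i, rfl, rfl⟩
  · exact Or.inr <| Or.inr <| Or.inl ⟨i, rfl, rfl⟩
  · exact Or.inr <| Or.inr <| Or.inr ⟨i, j, hij, rfl, rfl⟩

lemma not_oArc_origin {u : OV H} : ¬ OArc hubArc u none := by
  rintro (⟨-, h⟩ | ⟨i, -, h⟩ | ⟨i, -, h⟩ | ⟨i, j, -, -, h⟩) <;> simp at h

lemma AtLayer.succ_of_teArc {n : ℕ} {u v : TEV H} (hu : AtLayer n u)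
    (h : TEArc K hubArc u v) : AtLayer (n + 1) v := by
  rcases h with ⟨rfl, rfl⟩ | ⟨i, rfl, rfl⟩ | ⟨i, k, -, -, rfl, rfl⟩ |
    ⟨i, j, k, -, -, -, rfl, rfl⟩ <;> simp_all [AtLayer]

lemma liftPath_map_teProj {n : ℕ} {u : TEV H} {t : List (TEV H)}
    (hc : (u :: t).IsChain (TEArc K hubArc)) (hu : AtLayer n u) :
    liftPath n ((u :: t).map teProj) = u :: t := by
  induction t generalizing n u with
  | nil => simp [liftPath, layerVertex_teProj hu]
  | cons v t ih =>
    obtain ⟨huv, hc⟩ := List.isChain_cons_cons.mp hc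
    rw [List.map_cons, liftPath, layerVertex_teProj hu, ih hc (hu.succ_of_teArc huv)]

lemma length_add_le_of_isChain (hK : 1 ≤ K) {n : ℕ} {u v : TEV H} {t : List (TEV H)}
    (hc : (u :: v :: t).IsChain (TEArc K hubArc)) (hu : AtLayer n u)
    (hd : (u :: v :: t).getLast? = some (some none)) :
    (u :: v :: t).length + n ≤ K + 1 := by
  obtain ⟨huv, hc⟩ := List.isChain_cons_cons.mp hc
  rcases t with _ | ⟨w, t⟩
  · obtain rfl : v = some none := by simpa using hd
    have hn : n + 1 ≤ K := by
      rcases huv with ⟨rfl, -⟩ | ⟨i, -, h⟩ | ⟨i, k, -, hk, rfl, -⟩ |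
        ⟨i, j, k, -, -, -, -, h⟩
      · obtain rfl : n = 0 := hu
        exact hK
      · simp at h
      · obtain rfl : k = n := hu
        omega
      · simp at h
    simp only [List.length_cons, List.length_nil]
    omega
  · have := length_add_le_of_isChain hK hc (hu.succ_of_teArc huv) (by simpa using hd)
    simp only [List.length_cons] at this ⊢
    omega

lemma teArc_layerVertex {n : ℕ} {u v : OV H} (h : OArc hubArc u v) (hu : u = none ↔ n = 0)
    (hn : n + 1 ≤ K) (hv : ∀ j, v = some (some j) → n + 2 ≤ K) :
    TEArc K hubArc (layerVertex n u) (layerVertex (n + 1) v) := by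
  rcases h with ⟨rfl, rfl⟩ | ⟨j, rfl, rfl⟩ | ⟨i, rfl, rfl⟩ | ⟨i, j, hij, rfl, rfl⟩
  · exact Or.inl ⟨rfl, rfl⟩
  · obtain rfl : n = 0 := hu.mp rfl
    exact Or.inr <| Or.inl ⟨j, rfl, rfl⟩
  · have : n ≠ 0 := by simpa using hu
    exact Or.inr <| Or.inr <| Or.inl ⟨i, n, by omega, by omega, rfl, rfl⟩
  · have : n ≠ 0 := by simpa using hu
    have := hv j rfl
    exact Or.inr <| Or.inr <| Or.inr ⟨i, j, n, hij, by omega, by omega, rfl, rfl⟩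

lemma isChain_liftPath {n : ℕ} {q : List (OV H)} (hc : q.IsChain (OArc hubArc))
    (hd : q.getLast? = some (some none)) (hq : q.head? = some none ↔ n = 0)
    (hlen : q.length + n ≤ K + 1) : (liftPath n q).IsChain (TEArc K hubArc) := by
  induction q generalizing n with
  | nil => exact List.IsChain.nil
  | cons u t ih =>
    rcases t with _ | ⟨v, t⟩
    · exact List.isChain_singleton _
    obtain ⟨huv, hc⟩ := List.isChain_cons_cons.mp hc
    simp only [List.length_cons] at hlen
    have hv : ∀ j, v = some (some j) → n + 2 ≤ K := by
      rintro j rfl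
      rcases t with _ | ⟨w, t⟩
      · simp at hd
      · simp only [List.length_cons] at hlen
        omega
    refine List.isChain_cons_cons.mpr ⟨?_, ih hc (by simpa using hd) ?_ ?_⟩
    · exact teArc_layerVertex huv (by simpa using hq) (by omega) hv
    · simpa using fun h : v = none => not_oArc_origin (h ▸ huv)
    · simp only [List.length_cons]
      omega

lemma getLast?_liftPath {n : ℕ} {q : List (OV H)} (hd : q.getLast? = some (some none)) :
    (liftPath n q).getLast? = some (some none) := by
  have : (liftPath n q).getLast?.map teProj = some (some none) := by
    rw [← List.getLast?_map, map_teProj_liftPath, hd]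
  obtain ⟨v, hv, hvd⟩ := Option.map_eq_some_iff.mp this
  rw [hv, eq_dest_of_teProj_eq_dest hvd]

variable (H K hubArc)

abbrev TEPath : Type _ :=
  {p : List (TEV H) // p.IsChain (TEArc K hubArc) ∧ p.head? = some none ∧
    p.getLast? = some (some none)}

abbrev OPath : Type _ :=
  {p : List (OV H) // p.IsChain (OArc hubArc) ∧ p.head? = some none ∧
    p.getLast? = some (some none) ∧ p.length - 1 ≤ K}

variable {H K hubArc}

lemma TEPath.length_le (hK : 1 ≤ K) (p : TEPath H K hubArc) : p.1.length ≤ K + 1 := by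
  obtain ⟨_, _, hp⟩ := List.exists_eq_cons_cons p.2.2.1 p.2.2.2 (by simp)
  have hc := p.2.1
  have hd := p.2.2.2
  rw [hp] at hc hd ⊢
  exact length_add_le_of_isChain (n := 0) hK hc rfl hd

lemma TEPath.liftPath_map_teProj (p : TEPath H K hubArc) :
    liftPath 0 (p.1.map teProj) = p.1 := by
  obtain ⟨t, hp⟩ := List.head?_eq_some_iff.mp p.2.2.1
  rw [hp]
  exact TransferExpanded.liftPath_map_teProj (hp ▸ p.2.1) rfl

lemma OPath.isChain_liftPath (q : OPath H K hubArc) :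
    (liftPath 0 q.1).IsChain (TEArc K hubArc) := by
  obtain ⟨t, hq⟩ := List.head?_eq_some_iff.mp q.2.2.1
  refine TransferExpanded.isChain_liftPath q.2.1 q.2.2.2.1 (by simp [hq]) ?_
  have := q.2.2.2.2
  simp only [hq, List.length_cons] at this ⊢
  omega

lemma OPath.head?_liftPath (q : OPath H K hubArc) : (liftPath 0 q.1).head? = some none := by
  obtain ⟨t, hq⟩ := List.head?_eq_some_iff.mp q.2.2.1
  simp [hq, liftPath, layerVertex]

variable (H K hubArc)

def projEquiv (hK : 1 ≤ K) : TEPath H K hubArc ≃ OPath H K hubArc where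
  toFun p := ⟨p.1.map teProj, List.isChain_map_of_isChain _ (fun _ _ => oArc_teProj) p.2.1,
    by simp [p.2.2.1, teProj], by simp [p.2.2.2, teProj], by simp [p.length_le hK]⟩
  invFun q :=
    ⟨liftPath 0 q.1, q.isChain_liftPath, q.head?_liftPath, getLast?_liftPath q.2.2.2.1⟩
  left_inv p := Subtype.ext p.liftPath_map_teProj
  right_inv q := Subtype.ext (map_teProj_liftPath 0 q.1)

end TransferExpanded

theorem te_bijection_general {H : Type*} (K : ℕ) (hK : 2 ≤ K) (hubArc : H → H → Prop)
    (γ : OV H → OV H → ℝ) :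
    ∃ e : {p : List (TEV H) // p.Chain' (TEArc K hubArc) ∧
            p.head? = some (none : TEV H) ∧
            p.getLast? = some (some none : TEV H)} ≃
          {p : List (OV H) // p.Chain' (OArc hubArc) ∧
            p.head? = some (none : OV H) ∧
            p.getLast? = some (some none : OV H) ∧
            p.length - 1 ≤ K},
      ∀ p, (e p).val = p.val.map teProj ∧
        pathCost γ (e p).val = pathCost (fun u v => γ (teProj u) (teProj v)) p.val :=
  ⟨TransferExpanded.projEquiv H K hubArc (by omega),
    fun p => ⟨rfl, pathCost_map γ teProj p.val⟩⟩

/-- There is a bijection between directed `o`–`d` paths in the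
transfer-expanded graph and directed `o`–`d` paths of the original graph
using at most `K` arcs; the bijection acts by forgetting layers, hence
preserves the multiset of underlying original arcs and the path cost. -/
theorem te_bijection {H : Type*} (K : ℕ) (hK : 2 ≤ K) (hubArc : H → H → Prop)
    (γ : OV H → OV H → ℝ) (hγ : ∀ u v, 0 ≤ γ u v) :
    ∃ e : {p : List (TEV H) // p.Chain' (TEArc K hubArc) ∧
            p.head? = some (none : TEV H) ∧
            p.getLast? = some (some none : TEV H)} ≃
          {p : List (OV H) // p.Chain' (OArc hubArc) ∧
            p.head? = some (none : OV H) ∧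
            p.getLast? = some (some none : OV H) ∧
            p.length - 1 ≤ K},
      ∀ p, (e p).val = p.val.map teProj ∧
        pathCost γ (e p).val = pathCost (fun u v => γ (teProj u) (teProj v)) p.val :=
  te_bijection_general K hK hubArc γ
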